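/- (Deterministic core of Theorem 5.2) Let P and P' be two transition functions and π a policy on an episodic loop-free MDP. Suppose there exist a reference transition function P̄ and nonnegative radii ε(x,a) such that for every x ∈ X_s (s ≤ L−1) and a ∈ A, both Σ_{x'∈X_{s+1}} |P(x'|x,a) − P̄(x'|x,a)| ≤ ε(x,a) and Σ_{x'∈X_{s+1}} |P'(x'|x,a) − P̄(x'|x,a)| ≤ ε(x,a). Then Σ_{k=0}^{L−1} Σ_{x∈X_k} Σ_{a∈A} Σ_{x'∈X_{k+1}} | q^{P',π}(x,a,x') − q^{P,π}(x,a,x') | ≤ 2L·Σ_{s=0}^{L−1} Σ_{x∈X_s} Σ_{a∈A} q^{P,π}(x,a)·ε(x,a). -/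

import Mathlib

open Finset

/-- An episodic loop-free MDP: layers `X 0, …, X L` (encoded as an `ℕ`-indexed family of
types, so distinct layers are automatically disjoint), with `X 0` and `X L` singletons,
and a finite nonempty action set `A`. -/
structure LoopFreeMDP where
  L : ℕ
  hL : 1 ≤ L
  X : ℕ → Type
  instFintypeX : ∀ k, Fintype (X k)
  instDecEqX : ∀ k, DecidableEq (X k)
  nonemptyX : ∀ k, k ≤ L → Nonempty (X k)
  x0 : X 0
  hX0 : ∀ y : X 0, y = x0
  xL : X L
  hXL : ∀ y : X L, y = xL
  A : Type
  instFintypeA : Fintype A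
  instDecEqA : DecidableEq A
  instNonemptyA : Nonempty A

attribute [instance] LoopFreeMDP.instFintypeX LoopFreeMDP.instDecEqX
  LoopFreeMDP.instFintypeA LoopFreeMDP.instDecEqA LoopFreeMDP.instNonemptyA

namespace LoopFreeMDP

/-- The type of candidate transition functions. -/
abbrev TransKer (M : LoopFreeMDP) := ∀ k, M.X k → M.A → M.X (k + 1) → ℝ

/-- The type of candidate policies. -/
abbrev PolicyKer (M : LoopFreeMDP) := ∀ k, M.X k → M.A → ℝ

/-- `P` is a transition function: for every layer `k < L`, state and action,
`P (·|x,a)` is a probability vector on `X (k+1)`. -/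
def IsTransition (M : LoopFreeMDP) (P : M.TransKer) : Prop :=
  ∀ k, k < M.L → ∀ (x : M.X k) (a : M.A),
    (∀ x', 0 ≤ P k x a x') ∧ (∑ x', P k x a x' = 1)

/-- `π` is a policy: for every layer `k < L` and state, `π (·|x)` is a probability
vector on `A`. -/
def IsPolicy (M : LoopFreeMDP) (π : M.PolicyKer) : Prop :=
  ∀ k, k < M.L → ∀ x : M.X k,
    (∀ a, 0 ≤ π k x a) ∧ (∑ a, π k x a = 1)

/-- The state-visitation probabilities `μ_k`, defined layer by layer. -/
def mu (M : LoopFreeMDP) (P : M.TransKer) (π : M.PolicyKer) : ∀ k, M.X k → ℝ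
  | 0, _ => 1
  | k + 1, x' => ∑ x : M.X k, ∑ a : M.A, M.mu P π k x * π k x a * P k x a x'

/-- The occupancy measure `q^{P,π}(x,a,x') = μ_k(x)·π(a|x)·P(x'|x,a)`. -/
def occ (M : LoopFreeMDP) (P : M.TransKer) (π : M.PolicyKer)
    (k : ℕ) (x : M.X k) (a : M.A) (x' : M.X (k + 1)) : ℝ :=
  M.mu P π k x * π k x a * P k x a x'

end LoopFreeMDP

/-!
Writing `q' - q = (μ' - μ)·π·P' + μ·π·(P' - P)`, the L1 distance between the layer-`k`
occupancy measures of `P'` and `P` is at most the L1 distance between the state distributions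
`μ'_k, μ_k` plus the expected transition error `Σ_{x,a} μ_k(x)π(a|x)‖P'(·|x,a) - P(·|x,a)‖₁`;
and the distance between `μ'_{k+1}` and `μ_{k+1}` is at most that between the layer-`k`
occupancies, since `μ_{k+1}` is a marginal of `q_k`. By induction the layer-`k` occupancy distance
is at most the sum of the expected transition errors of layers `0, …, k`. Through `P̄`, the
triangle inequality bounds `‖P' - P‖₁` by `2ε`, and summing over the `L` layers gives the factor
`L`.
-/

lemma sum_abs_sub_le_sum_abs_sub_add_sum_abs_sub {ι : Type*} (s : Finset ι) (f g h : ι → ℝ) :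
    ∑ i ∈ s, |f i - g i| ≤ ∑ i ∈ s, |f i - h i| + ∑ i ∈ s, |g i - h i| := by
  rw [← sum_add_distrib]
  exact sum_le_sum fun i _ => (abs_sub_le _ _ _).trans_eq (by rw [abs_sub_comm (h i)])

namespace LoopFreeMDP

variable (M : LoopFreeMDP)

def transDist (P P' : M.TransKer) (k : ℕ) (x : M.X k) (a : M.A) : ℝ :=
  ∑ x', |P' k x a x' - P k x a x'|

def muDist (P P' : M.TransKer) (π : M.PolicyKer) (k : ℕ) : ℝ :=
  ∑ x, |M.mu P' π k x - M.mu P π k x|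

def occDist (P P' : M.TransKer) (π : M.PolicyKer) (k : ℕ) : ℝ :=
  ∑ x, ∑ a, ∑ x', |M.occ P' π k x a x' - M.occ P π k x a x'|

/-- The expectation of `f k` under the state-action occupancy `q^{P,π}(x,a)` of layer `k`. -/
def occExpect (P : M.TransKer) (π : M.PolicyKer) (f : ∀ k, M.X k → M.A → ℝ) (k : ℕ) : ℝ :=
  ∑ x, ∑ a, M.mu P π k x * π k x a * f k x a

variable {M} {P P' : M.TransKer} {π : M.PolicyKer}

lemma mu_nonneg (hP : M.IsTransition P) (hπ : M.IsPolicy π) :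
    ∀ k ≤ M.L, ∀ x : M.X k, 0 ≤ M.mu P π k x
  | 0, _, _ => zero_le_one
  | k + 1, hk, x' => sum_nonneg fun x _ => sum_nonneg fun a _ =>
      mul_nonneg (mul_nonneg (mu_nonneg hP hπ k (by omega) x) ((hπ k hk x).1 a))
        ((hP k hk x a).1 x')

lemma sum_occ_eq {k : ℕ} {x : M.X k} {a : M.A} (hP : ∑ x', P k x a x' = 1) :
    ∑ x', M.occ P π k x a x' = M.mu P π k x * π k x a := by
  simp only [occ, ← mul_sum, hP, mul_one]

lemma occExpect_nonneg (hP : M.IsTransition P) (hπ : M.IsPolicy π)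
    {f : ∀ k, M.X k → M.A → ℝ} {k : ℕ} (hk : k < M.L) (hf : ∀ x a, 0 ≤ f k x a) :
    0 ≤ M.occExpect P π f k :=
  sum_nonneg fun x _ => sum_nonneg fun a _ =>
    mul_nonneg (mul_nonneg (mu_nonneg hP hπ k hk.le x) ((hπ k hk x).1 a)) (hf x a)

lemma transDist_le_two_mul {Pbar : M.TransKer} {k : ℕ} {x : M.X k} {a : M.A} {r : ℝ}
    (hP : ∑ x', |P k x a x' - Pbar k x a x'| ≤ r)
    (hP' : ∑ x', |P' k x a x' - Pbar k x a x'| ≤ r) :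
    M.transDist P P' k x a ≤ 2 * r := by
  have := sum_abs_sub_le_sum_abs_sub_add_sum_abs_sub univ (P' k x a) (P k x a) (Pbar k x a)
  rw [transDist]
  linarith

lemma muDist_zero : M.muDist P P' π 0 = 0 := by
  simp [muDist, mu]

lemma muDist_succ_le_occDist (k : ℕ) : M.muDist P P' π (k + 1) ≤ M.occDist P P' π k := by
  have hmarginal : ∀ x', M.mu P' π (k + 1) x' - M.mu P π (k + 1) x' =
      ∑ x, ∑ a, (M.occ P' π k x a x' - M.occ P π k x a x') := by
    intro x'
    simp only [mu, occ, sum_sub_distrib]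
  calc M.muDist P P' π (k + 1)
      ≤ ∑ x', ∑ x, ∑ a, |M.occ P' π k x a x' - M.occ P π k x a x'| := by
        refine sum_le_sum fun x' _ => ?_
        rw [hmarginal]
        exact (abs_sum_le_sum_abs _ _).trans (sum_le_sum fun x _ => abs_sum_le_sum_abs _ _)
    _ = M.occDist P P' π k := by
        rw [occDist, sum_comm]
        exact sum_congr rfl fun x _ => sum_comm

lemma sum_abs_occ_sub_le (hP : M.IsTransition P) (hP' : M.IsTransition P')
    (hπ : M.IsPolicy π) {k : ℕ} (hk : k < M.L) (x : M.X k) (a : M.A) :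
    ∑ x', |M.occ P' π k x a x' - M.occ P π k x a x'|
      ≤ |M.mu P' π k x - M.mu P π k x| * π k x a
        + M.mu P π k x * π k x a * M.transDist P P' k x a := by
  have hμπ : 0 ≤ M.mu P π k x * π k x a :=
    mul_nonneg (mu_nonneg hP hπ k hk.le x) ((hπ k hk x).1 a)
  calc ∑ x', |M.occ P' π k x a x' - M.occ P π k x a x'|
      ≤ ∑ x', (|M.mu P' π k x - M.mu P π k x| * π k x a * P' k x a x'
          + M.mu P π k x * π k x a * |P' k x a x' - P k x a x'|) := by
        refine sum_le_sum fun x' _ => ?_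
        have hsplit : M.occ P' π k x a x' - M.occ P π k x a x'
            = (M.mu P' π k x - M.mu P π k x) * π k x a * P' k x a x'
              + M.mu P π k x * π k x a * (P' k x a x' - P k x a x') := by
          simp only [occ]; ring
        rw [hsplit]
        refine (abs_add_le _ _).trans_eq ?_
        rw [abs_mul, abs_mul, abs_mul, abs_of_nonneg ((hπ k hk x).1 a),
          abs_of_nonneg ((hP' k hk x a).1 x'), abs_of_nonneg hμπ]
    _ = _ := by
        rw [sum_add_distrib, ← mul_sum, ← mul_sum, (hP' k hk x a).2, mul_one, transDist]

lemma occDist_le_muDist_add (hP : M.IsTransition P) (hP' : M.IsTransition P')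
    (hπ : M.IsPolicy π) {k : ℕ} (hk : k < M.L) :
    M.occDist P P' π k ≤ M.muDist P P' π k + M.occExpect P π (M.transDist P P') k := by
  calc M.occDist P P' π k
      ≤ ∑ x, ∑ a, (|M.mu P' π k x - M.mu P π k x| * π k x a
          + M.mu P π k x * π k x a * M.transDist P P' k x a) :=
        sum_le_sum fun x _ => sum_le_sum fun a _ => sum_abs_occ_sub_le hP hP' hπ hk x a
    _ = _ := by
        simp only [sum_add_distrib, ← mul_sum, (hπ k hk _).2, mul_one, muDist, occExpect]

lemma muDist_le_sum_occExpect (hP : M.IsTransition P) (hP' : M.IsTransition P')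
    (hπ : M.IsPolicy π) :
    ∀ k ≤ M.L, M.muDist P P' π k ≤ ∑ s ∈ range k, M.occExpect P π (M.transDist P P') s
  | 0, _ => by rw [muDist_zero, sum_range_zero]
  | k + 1, hk => by
    rw [sum_range_succ]
    calc M.muDist P P' π (k + 1) ≤ M.occDist P P' π k := muDist_succ_le_occDist k
      _ ≤ _ := (occDist_le_muDist_add hP hP' hπ hk).trans
          (add_le_add_left (muDist_le_sum_occExpect hP hP' hπ k (by omega)) _)

lemma occDist_le_sum_occExpect (hP : M.IsTransition P) (hP' : M.IsTransition P')
    (hπ : M.IsPolicy π) {k : ℕ} (hk : k < M.L) :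
    M.occDist P P' π k ≤ ∑ s ∈ range (k + 1), M.occExpect P π (M.transDist P P') s := by
  rw [sum_range_succ]
  exact (occDist_le_muDist_add hP hP' hπ hk).trans
    (add_le_add_left (muDist_le_sum_occExpect hP hP' hπ k hk.le) _)

lemma occExpect_transDist_le {Pbar : M.TransKer} {ε : ∀ k, M.X k → M.A → ℝ}
    (hP : M.IsTransition P) (hπ : M.IsPolicy π) {k : ℕ} (hk : k < M.L)
    (hPclose : ∀ x a, ∑ x', |P k x a x' - Pbar k x a x'| ≤ ε k x a)
    (hP'close : ∀ x a, ∑ x', |P' k x a x' - Pbar k x a x'| ≤ ε k x a) :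
    M.occExpect P π (M.transDist P P') k
      ≤ 2 * ∑ x, ∑ a, (∑ x', M.occ P π k x a x') * ε k x a := by
  simp only [occExpect, sum_occ_eq (hP k hk _ _).2, mul_sum]
  refine sum_le_sum fun x _ => sum_le_sum fun a _ => ?_
  calc M.mu P π k x * π k x a * M.transDist P P' k x a
      ≤ M.mu P π k x * π k x a * (2 * ε k x a) :=
        mul_le_mul_of_nonneg_left (transDist_le_two_mul (hPclose x a) (hP'close x a))
          (mul_nonneg (mu_nonneg hP hπ k hk.le x) ((hπ k hk x).1 a))
    _ = 2 * (M.mu P π k x * π k x a * ε k x a) := by ring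

end LoopFreeMDP

open LoopFreeMDP in
theorem occupancy_confidence_L1_bound_general (M : LoopFreeMDP)
    (P P' Pbar : M.TransKer) (π : M.PolicyKer)
    (hP : M.IsTransition P) (hP' : M.IsTransition P')
    (hπ : M.IsPolicy π)
    (ε : ∀ k, M.X k → M.A → ℝ)
    (hPclose : ∀ k, k < M.L → ∀ (x : M.X k) (a : M.A),
      ∑ x' : M.X (k + 1), |P k x a x' - Pbar k x a x'| ≤ ε k x a)
    (hP'close : ∀ k, k < M.L → ∀ (x : M.X k) (a : M.A),
      ∑ x' : M.X (k + 1), |P' k x a x' - Pbar k x a x'| ≤ ε k x a) :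
    ∑ k ∈ Finset.range M.L, ∑ x : M.X k, ∑ a : M.A, ∑ x' : M.X (k + 1),
        |M.occ P' π k x a x' - M.occ P π k x a x'|
      ≤ 2 * (M.L : ℝ) * ∑ s ∈ Finset.range M.L, ∑ x : M.X s, ∑ a : M.A,
          (∑ x' : M.X (s + 1), M.occ P π s x a x') * ε s x a := by
  set err := M.occExpect P π (M.transDist P P')
  have herr_nonneg : ∀ s ∈ range M.L, 0 ≤ err s := fun s hs =>
    occExpect_nonneg hP hπ (mem_range.1 hs) fun x a => sum_nonneg fun _ _ => abs_nonneg _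
  calc ∑ k ∈ range M.L, M.occDist P P' π k
      ≤ ∑ _k ∈ range M.L, ∑ s ∈ range M.L, err s := sum_le_sum fun k hk =>
        (occDist_le_sum_occExpect hP hP' hπ (mem_range.1 hk)).trans
          (sum_le_sum_of_subset_of_nonneg (range_subset_range.2 (mem_range.1 hk)) fun s hs _ =>
            herr_nonneg s hs)
    _ = M.L * ∑ s ∈ range M.L, err s := by rw [sum_const, card_range, nsmul_eq_mul]
    _ ≤ M.L * ∑ s ∈ range M.L, 2 * ∑ x, ∑ a, (∑ x', M.occ P π s x a x') * ε s x a := by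
        gcongr with s hs
        have hsL := mem_range.1 hs
        exact occExpect_transDist_le hP hπ hsL (hPclose s hsL) (hP'close s hsL)
    _ = _ := by rw [← mul_sum]; ring

/-- **Deterministic core of Theorem 5.2.** If two transition functions `P, P'` both lie in an
L1 confidence ball of radius `ε(x,a)` around a reference transition function `P̄`, then the L1
distance between their occupancy measures (for any policy `π`) is at most
`2L·Σ_{s<L} Σ_{x,a} q^{P,π}(x,a)·ε(x,a)`. -/
theorem occupancy_confidence_L1_bound (M : LoopFreeMDP)
    (P P' Pbar : M.TransKer) (π : M.PolicyKer)
    (hP : M.IsTransition P) (hP' : M.IsTransition P') (hPbar : M.IsTransition Pbar)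
    (hπ : M.IsPolicy π)
    (ε : ∀ k, M.X k → M.A → ℝ)
    (hε : ∀ k, k < M.L → ∀ (x : M.X k) (a : M.A), 0 ≤ ε k x a)
    (hPclose : ∀ k, k < M.L → ∀ (x : M.X k) (a : M.A),
      ∑ x' : M.X (k + 1), |P k x a x' - Pbar k x a x'| ≤ ε k x a)
    (hP'close : ∀ k, k < M.L → ∀ (x : M.X k) (a : M.A),
      ∑ x' : M.X (k + 1), |P' k x a x' - Pbar k x a x'| ≤ ε k x a) :
    ∑ k ∈ Finset.range M.L, ∑ x : M.X k, ∑ a : M.A, ∑ x' : M.X (k + 1),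
        |M.occ P' π k x a x' - M.occ P π k x a x'|
      ≤ 2 * (M.L : ℝ) * ∑ s ∈ Finset.range M.L, ∑ x : M.X s, ∑ a : M.A,
          (∑ x' : M.X (s + 1), M.occ P π s x a x') * ε s x a :=
  occupancy_confidence_L1_bound_general M P P' Pbar π hP hP' hπ ε hPclose hP'close
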